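/- Define f(t) = 2·∫₀^t (t − y)(e^{−y} − 1 + y)·y^{−2} dy for t ≥ 0. Then f(t) = 2t·ln t − (4 − 2γ)t + 2·ln t + (2γ + 2) + O(e^{−t}·t^{−2}) as t → ∞, where γ is the Euler–Mascheroni constant. -/

import Mathlib

/-!
Write `q y = e^{-y} - 1 + y` and `Ein t = ∫₀ᵗ (1 - e^{-y}) / y dy`. Since
`(t - y) q y / y² = t q y / y² - q y / y`, `q y / y = 1 - (1 - e^{-y}) / y` and
`q y / y² = (1 - e^{-y}) / y - (q y / y)'`, the integral is `(t + 1) Ein t - e^{-t} - 2 t + 1`.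
Splitting `∫₀^∞ log x e^{-x} dx = Γ'(1) = -γ` at `t` and integrating by parts on both pieces gives
`Ein t = log t + γ + E₁ t` with `E₁ t = ∫ₜ^∞ e^{-y} / y dy`, so the error term is
`2 ((t + 1) E₁ t - e^{-t})`. Two more integrations by parts,
`E₁ t = e^{-t} / t - e^{-t} / t² + 2 ∫ₜ^∞ e^{-y} / y³ dy`, show that it is `O(e^{-t} / t²)`.
-/

open Filter Asymptotics Real intervalIntegral MeasureTheory Set Topology

theorem one_sub_exp_neg_nonneg {y : ℝ} (hy : 0 ≤ y) : 0 ≤ 1 - exp (-y) :=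
  sub_nonneg.2 (exp_le_one_iff.2 (neg_nonpos.2 hy))

theorem one_sub_exp_neg_le (y : ℝ) : 1 - exp (-y) ≤ y := by
  linarith [one_sub_le_exp_neg y]

theorem exp_neg_sub_one_add_nonneg (y : ℝ) : 0 ≤ exp (-y) - 1 + y := by
  linarith [one_sub_le_exp_neg y]

theorem exp_neg_sub_one_add_le (y : ℝ) : exp (-y) - 1 + y ≤ y * (1 - exp (-y)) := by
  have h := mul_le_mul_of_nonneg_left (add_one_le_exp y) (exp_pos (-y)).le
  rw [← exp_add, neg_add_cancel, exp_zero] at h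
  linarith

theorem intervalIntegrable_of_norm_le {f : ℝ → ℝ} {a b C : ℝ} (hf : Measurable f)
    (h : ∀ x ∈ uIoc a b, ‖f x‖ ≤ C) : IntervalIntegrable f volume a b :=
  intervalIntegrable_const.mono_fun' hf.aestronglyMeasurable
    (ae_restrict_of_forall_mem measurableSet_uIoc h)

theorem integral_zero_congr_of_pos {f g : ℝ → ℝ} {t : ℝ} (ht : 0 ≤ t)
    (h : ∀ y, 0 < y → f y = g y) : ∫ y in 0..t, f y = ∫ y in 0..t, g y :=
  integral_congr_ae (ae_of_all _ fun y hy => h y (uIoc_of_le ht ▸ hy).1)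

theorem intervalIntegrable_one_sub_exp_neg_div {t : ℝ} (ht : 0 ≤ t) :
    IntervalIntegrable (fun y => (1 - exp (-y)) / y) volume 0 t := by
  refine intervalIntegrable_of_norm_le (C := 1) (by fun_prop) fun y hy => ?_
  rw [uIoc_of_le ht] at hy
  rw [norm_of_nonneg (div_nonneg (one_sub_exp_neg_nonneg hy.1.le) hy.1.le), div_le_one hy.1]
  exact one_sub_exp_neg_le y

section ExpTail

variable {t : ℝ}

theorem integrableOn_exp_neg_div_pow_Ioi (ht : 0 < t) (n : ℕ) :
    IntegrableOn (fun y => exp (-y) / y ^ n) (Ioi t) := by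
  refine ((integrableOn_exp_neg_Ioi t).div_const (t ^ n)).mono'
    (by fun_prop : Measurable fun y : ℝ => exp (-y) / y ^ n).aestronglyMeasurable ?_
  refine ae_restrict_of_forall_mem measurableSet_Ioi fun y (hy : t < y) => ?_
  have : 0 < y := ht.trans hy
  rw [norm_of_nonneg (by positivity)]
  gcongr

theorem integral_exp_neg_div_pow_Ioi_nonneg (ht : 0 ≤ t) (n : ℕ) :
    0 ≤ ∫ y in Ioi t, exp (-y) / y ^ n :=
  setIntegral_nonneg measurableSet_Ioi fun y (hy : t < y) => by
    have : 0 < y := ht.trans_lt hy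
    positivity

theorem integral_exp_neg_div_pow_Ioi_le (ht : 0 < t) (n : ℕ) :
    ∫ y in Ioi t, exp (-y) / y ^ n ≤ exp (-t) / t ^ n := by
  calc ∫ y in Ioi t, exp (-y) / y ^ n ≤ ∫ y in Ioi t, exp (-y) / t ^ n := by
        refine setIntegral_mono_on (integrableOn_exp_neg_div_pow_Ioi ht n)
          ((integrableOn_exp_neg_Ioi t).div_const _) measurableSet_Ioi fun y (hy : t < y) => ?_
        gcongr
    _ = exp (-t) / t ^ n := by rw [MeasureTheory.integral_div, integral_exp_neg_Ioi]

theorem integral_exp_neg_div_pow_Ioi (ht : 0 < t) (n : ℕ) :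
    ∫ y in Ioi t, exp (-y) / y ^ n
      = exp (-t) / t ^ n - n * ∫ y in Ioi t, exp (-y) / y ^ (n + 1) := by
  have hderiv : ∀ y ∈ Ici t, HasDerivAt (fun y => -(exp (-y) / y ^ n))
      (exp (-y) / y ^ n + n * (exp (-y) / y ^ (n + 1))) y := by
    intro y (hy : t ≤ y)
    have hy0 : y ≠ 0 := (ht.trans_le hy).ne'
    refine (((hasDerivAt_neg y).exp).div (hasDerivAt_pow n y) (pow_ne_zero n hy0)).neg
      |>.congr_deriv ?_
    -- `hasDerivAt_pow` writes the derivative with the truncated exponent `n - 1`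
    rcases n with _ | m
    · simp
    · simp only [Nat.add_sub_cancel]
      push_cast
      field_simp
      ring
  have hlim : Tendsto (fun y => -(exp (-y) / y ^ n)) atTop (𝓝 0) := by
    refine neg_zero (G := ℝ) ▸ (squeeze_zero' ?_ ?_ tendsto_exp_neg_atTop_nhds_zero).neg
    · filter_upwards [eventually_gt_atTop 0] with y hy
      positivity
    · filter_upwards [eventually_ge_atTop 1] with y hy
      exact div_le_self (exp_pos _).le (one_le_pow₀ hy)
  have hint₁ := integrableOn_exp_neg_div_pow_Ioi ht n
  have hint₂ := (integrableOn_exp_neg_div_pow_Ioi ht (n + 1)).const_mul (n : ℝ)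
  have := integral_Ioi_of_hasDerivAt_of_tendsto' hderiv (hint₁.add hint₂) hlim
  rw [integral_add hint₁ hint₂, MeasureTheory.integral_const_mul] at this
  linarith

theorem add_one_mul_integral_exp_neg_div_Ioi_sub_isBigO :
    (fun t => (t + 1) * (∫ y in Ioi t, exp (-y) / y) - exp (-t))
      =O[atTop] fun t => exp (-t) / t ^ 2 := by
  refine isBigO_iff.2 ⟨5, ?_⟩
  filter_upwards [eventually_ge_atTop 1] with t ht
  have ht0 : 0 < t := one_pos.trans_le ht
  set J := ∫ y in Ioi t, exp (-y) / y ^ 3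
  have hJ0 : 0 ≤ J := integral_exp_neg_div_pow_Ioi_nonneg ht0.le 3
  have hJ1 : J ≤ exp (-t) / t ^ 3 := integral_exp_neg_div_pow_Ioi_le ht0 3
  have hE : (t + 1) * (∫ y in Ioi t, exp (-y) / y) - exp (-t)
      = 2 * (t + 1) * J - exp (-t) / t ^ 2 := by
    have h₁ := integral_exp_neg_div_pow_Ioi ht0 1
    have h₂ := integral_exp_neg_div_pow_Ioi ht0 2
    simp only [pow_one] at h₁
    rw [h₁, h₂]
    field_simp
    ring
  have hbound : 2 * (t + 1) * (exp (-t) / t ^ 3) ≤ 4 * (exp (-t) / t ^ 2) := by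
    rw [show 2 * (t + 1) * (exp (-t) / t ^ 3) = 2 * (1 + 1 / t) * (exp (-t) / t ^ 2) by
      field_simp]
    gcongr
    linarith [div_le_one_of_le₀ ht ht0.le]
  rw [norm_of_nonneg (by positivity : 0 ≤ exp (-t) / t ^ 2), norm_eq_abs, hE, abs_le]
  constructor <;> nlinarith [exp_pos (-t), (by positivity : 0 < exp (-t) / t ^ 2)]

end ExpTail

section Ein

theorem integrableOn_log_mul_exp_neg_Ioi :
    IntegrableOn (fun x => log x * exp (-x)) (Ioi 0) := by
  rw [← Ioc_union_Ioi_eq_Ioi zero_le_one]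
  refine (intervalIntegrable_log'.mul_continuousOn (by fun_prop)).1.union ?_
  have hint : IntegrableOn (fun x => exp (-x) * x) (Ioi 1) := by
    simpa [show (2 : ℝ) - 1 = 1 by norm_num] using
      (Real.GammaIntegral_convergent two_pos).mono_set (Ioi_subset_Ioi zero_le_one)
  refine hint.mono' (by fun_prop : Measurable fun x => log x * exp (-x)).aestronglyMeasurable ?_
  refine ae_restrict_of_forall_mem measurableSet_Ioi fun x (hx : 1 < x) => ?_
  rw [norm_mul, norm_of_nonneg (log_nonneg hx.le), norm_of_nonneg (exp_pos _).le, mul_comm]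
  gcongr
  exact (log_le_sub_one_of_pos (zero_lt_one.trans hx)).trans (by linarith)

theorem integral_log_mul_exp_neg_Ioi_zero :
    ∫ x in Ioi 0, log x * exp (-x) = -eulerMascheroniConstant := by
  set I := ∫ x in Ioi 0, log x * exp (-x)
  have hGammaIntegral : HasDerivAt Complex.GammaIntegral (I : ℂ) 1 := by
    convert Complex.hasDerivAt_GammaIntegral (s := 1) (by norm_num) using 1
    rw [← integral_complex_ofReal]
    refine setIntegral_congr_fun measurableSet_Ioi fun x _ => ?_
    simp
  have hGamma : HasDerivAt Complex.Gamma (I : ℂ) (1 : ℝ) := by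
    refine Complex.ofReal_one ▸ hGammaIntegral.congr_of_eventuallyEq ?_
    filter_upwards [(isOpen_lt continuous_const Complex.continuous_re).mem_nhds
      (by norm_num : (0 : ℝ) < (1 : ℂ).re)] with s hs
    exact Complex.Gamma_eq_integral hs
  have hGammaReal : HasDerivAt Real.Gamma I 1 := by
    simpa [Complex.Gamma_ofReal] using hGamma.real_of_complex
  exact hGammaReal.unique hasDerivAt_Gamma_one

variable {t : ℝ}

theorem integral_log_mul_exp_neg (ht : 0 < t) :
    ∫ x in 0..t, log x * exp (-x)
      = (1 - exp (-t)) * log t - ∫ x in 0..t, (1 - exp (-x)) / x := by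
  have hderiv : ∀ x ∈ Ioi (0 : ℝ), HasDerivAt (fun x => (1 - exp (-x)) * log x)
      (log x * exp (-x) + (1 - exp (-x)) / x) x := by
    intro x (hx : 0 < x)
    refine (((hasDerivAt_neg x).exp.const_sub 1).mul (hasDerivAt_log hx.ne')).congr_deriv ?_
    field_simp
  have hlog : IntervalIntegrable (fun x => log x * exp (-x)) volume 0 t :=
    intervalIntegrable_log'.mul_continuousOn (by fun_prop)
  have hlim : Tendsto (fun x => (1 - exp (-x)) * log x) (𝓝[>] 0) (𝓝 0) := by
    have hmul_log : Tendsto (fun x => x * log x) (𝓝[>] 0) (𝓝 0) := by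
      simpa using (continuous_mul_log.tendsto 0).mono_left nhdsWithin_le_nhds
    refine squeeze_zero_norm' ?_ (norm_zero (E := ℝ) ▸ hmul_log.norm)
    filter_upwards [self_mem_nhdsWithin] with x (hx : 0 < x)
    rw [norm_mul, norm_mul, norm_of_nonneg (one_sub_exp_neg_nonneg hx.le), norm_of_nonneg hx.le]
    gcongr
    exact one_sub_exp_neg_le x
  have := integral_eq_sub_of_hasDerivAt_of_tendsto ht (fun x hx => hderiv x hx.1)
    (hlog.add (intervalIntegrable_one_sub_exp_neg_div ht.le)) hlim
    (hderiv t ht).continuousAt.continuousWithinAt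
  rw [integral_add hlog (intervalIntegrable_one_sub_exp_neg_div ht.le)] at this
  linarith

theorem integral_log_mul_exp_neg_Ioi (ht : 0 < t) :
    ∫ x in Ioi t, log x * exp (-x) = exp (-t) * log t + ∫ x in Ioi t, exp (-x) / x := by
  have hderiv : ∀ x ∈ Ici t, HasDerivAt (fun x => -(exp (-x) * log x))
      (log x * exp (-x) - exp (-x) / x) x := by
    intro x (hx : t ≤ x)
    refine ((hasDerivAt_neg x).exp.mul (hasDerivAt_log (ht.trans_le hx).ne')).neg.congr_deriv ?_
    field_simp
    ring
  have hlim : Tendsto (fun x => -(exp (-x) * log x)) atTop (𝓝 0) := by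
    refine squeeze_zero_norm' ?_ (tendsto_pow_mul_exp_neg_atTop_nhds_zero 1)
    filter_upwards [eventually_ge_atTop 1] with x hx
    rw [norm_neg, norm_mul, norm_of_nonneg (exp_pos _).le, norm_of_nonneg (log_nonneg hx),
      pow_one, mul_comm]
    gcongr
    exact (log_le_sub_one_of_pos (zero_lt_one.trans_le hx)).trans (by linarith)
  have hlog := integrableOn_log_mul_exp_neg_Ioi.mono_set (Ioi_subset_Ioi ht.le)
  have hexp : IntegrableOn (fun x => exp (-x) / x) (Ioi t) := by
    simpa using integrableOn_exp_neg_div_pow_Ioi ht 1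
  have := integral_Ioi_of_hasDerivAt_of_tendsto' hderiv (hlog.sub hexp) hlim
  rw [integral_sub hlog hexp] at this
  linarith

theorem integral_one_sub_exp_neg_div (ht : 0 < t) :
    ∫ x in 0..t, (1 - exp (-x)) / x
      = log t + eulerMascheroniConstant + ∫ x in Ioi t, exp (-x) / x := by
  have h := integral_interval_add_Ioi integrableOn_log_mul_exp_neg_Ioi
    (integrableOn_log_mul_exp_neg_Ioi.mono_set (Ioi_subset_Ioi ht.le))
  rw [integral_log_mul_exp_neg ht, integral_log_mul_exp_neg_Ioi ht,
    integral_log_mul_exp_neg_Ioi_zero] at h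
  linear_combination -h

end Ein

section PoissonizedMean

variable {t : ℝ}

theorem intervalIntegrable_exp_neg_sub_one_add_div_sq (ht : 0 ≤ t) :
    IntervalIntegrable (fun y => (exp (-y) - 1 + y) / y ^ 2) volume 0 t := by
  refine intervalIntegrable_of_norm_le (C := 1) (by fun_prop) fun y hy => ?_
  rw [uIoc_of_le ht] at hy
  have hy0 : 0 < y := hy.1
  rw [norm_of_nonneg (by positivity [exp_neg_sub_one_add_nonneg y]), div_le_one (by positivity)]
  nlinarith [exp_neg_sub_one_add_le y, one_sub_exp_neg_le y]

theorem integral_exp_neg_sub_one_add_div_sq (ht : 0 < t) :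
    ∫ y in 0..t, (exp (-y) - 1 + y) / y ^ 2
      = (∫ y in 0..t, (1 - exp (-y)) / y) - (exp (-t) - 1 + t) / t := by
  have hderiv : ∀ y ∈ Ioi (0 : ℝ), HasDerivAt (fun y => (exp (-y) - 1 + y) / y)
      ((1 - exp (-y)) / y - (exp (-y) - 1 + y) / y ^ 2) y := by
    intro y (hy : 0 < y)
    refine ((((hasDerivAt_neg y).exp.sub_const 1).add (hasDerivAt_id' y)).div (hasDerivAt_id' y)
      hy.ne').congr_deriv ?_
    simp only [Pi.add_apply]
    field_simp
    ring
  have hlim : Tendsto (fun y => (exp (-y) - 1 + y) / y) (𝓝[>] 0) (𝓝 0) := by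
    refine squeeze_zero_norm' ?_ (tendsto_id.mono_left nhdsWithin_le_nhds)
    filter_upwards [self_mem_nhdsWithin] with y (hy : 0 < y)
    rw [id, norm_of_nonneg (div_nonneg (exp_neg_sub_one_add_nonneg y) hy.le), div_le_iff₀ hy]
    nlinarith [exp_neg_sub_one_add_le y, one_sub_exp_neg_le y]
  have hp := intervalIntegrable_one_sub_exp_neg_div ht.le
  have hq := intervalIntegrable_exp_neg_sub_one_add_div_sq ht.le
  have := integral_eq_sub_of_hasDerivAt_of_tendsto ht (fun y hy => hderiv y hy.1) (hp.sub hq)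
    hlim (hderiv t ht).continuousAt.continuousWithinAt
  rw [integral_sub hp hq] at this
  beta_reduce at this
  linarith

theorem integral_sub_mul_exp_neg_sub_one_add_div_sq (ht : 0 < t) :
    ∫ y in 0..t, (t - y) * (exp (-y) - 1 + y) / y ^ 2
      = (t + 1) * (∫ y in 0..t, (1 - exp (-y)) / y) - (exp (-t) + 2 * t - 1) := by
  have hp := intervalIntegrable_one_sub_exp_neg_div ht.le
  have hq := intervalIntegrable_exp_neg_sub_one_add_div_sq ht.le
  rw [integral_zero_congr_of_pos ht.le
      (g := fun y => t * ((exp (-y) - 1 + y) / y ^ 2) - (1 - (1 - exp (-y)) / y)) fun y hy => by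
      field_simp; ring,
    integral_sub (hq.const_mul t) (intervalIntegrable_const.sub hp),
    intervalIntegral.integral_const_mul, integral_sub intervalIntegrable_const hp,
    integral_exp_neg_sub_one_add_div_sq ht]
  simp only [intervalIntegral.integral_const, sub_zero, smul_eq_mul, mul_one]
  field_simp
  ring

end PoissonizedMean

theorem poissonized_mean_asymptotics :
    (fun t : ℝ =>
        (2 * ∫ y in (0:ℝ)..t, (t - y) * (Real.exp (-y) - 1 + y) / y ^ 2)
        - (2 * t * Real.log t - (4 - 2 * Real.eulerMascheroniConstant) * t
            + 2 * Real.log t + (2 * Real.eulerMascheroniConstant + 2)))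
      =O[atTop] (fun t : ℝ => Real.exp (-t) * t ^ (-2 : ℝ)) := by
  refine (add_one_mul_integral_exp_neg_div_Ioi_sub_isBigO.const_mul_left 2).congr' ?_ ?_
  · filter_upwards [eventually_gt_atTop 0] with t ht
    rw [integral_sub_mul_exp_neg_sub_one_add_div_sq ht, integral_one_sub_exp_neg_div ht]
    ring
  · filter_upwards [eventually_gt_atTop 0] with t ht
    rw [rpow_neg ht.le, rpow_two, div_eq_mul_inv]
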